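/- Let (X,d) be a complete metric space and {T_i}_{i∈ℕ} a sequence of maps T_i : X → X with a compact invariant set C ⊆ X (T_i(C) ⊆ C for all i), where each T_i is Lipschitz with constant s_i. If ∑_{k=1}^∞ ∏_{i=1}^k s_i < ∞, then the backward trajectories Ψ_k(x) = T_1 ∘ T_2 ∘ ⋯ ∘ T_k(x) converge as k → ∞ for every starting point x ∈ C, and the limit is the same point of C for all x ∈ C. -/
import Mathlib


open Filter Topology

/-- The backward trajectory maps `Ψ_k = T₁ ∘ T₂ ∘ ⋯ ∘ T_k` (with `0`-based indexing:
`Ψ_k = T 0 ∘ T 1 ∘ ⋯ ∘ T (k-1)`). -/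
def backwardTraj {α : Type*} (T : ℕ → α → α) : ℕ → α → α
  | 0 => id
  | k + 1 => backwardTraj T k ∘ T k

lemma backwardTraj_lipschitz {X : Type*} [MetricSpace X] (T : ℕ → X → X)
    (s : ℕ → NNReal) (hT : ∀ i, LipschitzWith (s i) (T i)) (k : ℕ) :
    LipschitzWith (∏ i ∈ Finset.range k, s i) (backwardTraj T k) := by
  induction k with
  | zero => simpa [backwardTraj] using LipschitzWith.id
  | succ n ih =>
    rw [Finset.prod_range_succ]
    exact LipschitzWith.comp ih (hT n)

lemma backwardTraj_mapsTo {X : Type*} (T : ℕ → X → X) (C : Set X)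
    (hinv : ∀ i : ℕ, Set.MapsTo (T i) C C) (k : ℕ) :
    Set.MapsTo (backwardTraj T k) C C := by
  induction k with
  | zero => exact fun x hx => hx
  | succ n ih => exact ih.comp (hinv n)

/-- (Proposition `BTp2`, convergence of backward trajectories): if the maps `{Tᵢ}` have a
compact invariant set `C`, each `Tᵢ` is Lipschitz with constant `sᵢ`, and
`∑_{k=1}^∞ ∏_{i=1}^k sᵢ < ∞`, then the backward trajectories `Ψ_k(x)` converge for every
starting point `x ∈ C` to one and the same limit in `C`. -/
theorem backwardTraj_converges
    {X : Type*} [MetricSpace X] [CompleteSpace X] (T : ℕ → X → X)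
    (C : Set X) (hCc : IsCompact C) (hinv : ∀ i : ℕ, Set.MapsTo (T i) C C)
    (s : ℕ → NNReal) (hT : ∀ i, LipschitzWith (s i) (T i))
    (hsum : Summable fun k => ∏ i ∈ Finset.range (k + 1), (s i : ℝ)) :
    ∀ x ∈ C, ∃ p ∈ C, ∀ y ∈ C,
      Tendsto (fun k => backwardTraj T k y) atTop (𝓝 p) := by
  intro x hx
  -- summability of the products without shift
  have hsum' : Summable (fun k => ∏ i ∈ Finset.range k, (s i : ℝ)) :=
    (summable_nat_add_iff 1).mp hsum
  have hprod0 : Tendsto (fun k => ∏ i ∈ Finset.range k, (s i : ℝ)) atTop (𝓝 0) :=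
    hsum'.tendsto_atTop_zero
  have hdistle : ∀ k (y z : X),
      dist (backwardTraj T k y) (backwardTraj T k z)
        ≤ (∏ i ∈ Finset.range k, (s i : ℝ)) * dist y z := by
    intro k y z
    have := (backwardTraj_lipschitz T s hT k).dist_le_mul y z
    simpa using this
  -- Cauchy for the fixed x
  have hbdd := hCc.isBounded
  have hmem : ∀ k, backwardTraj T k x ∈ C := fun k => backwardTraj_mapsTo T C hinv k hx
  have hcauchy : CauchySeq (fun k => backwardTraj T k x) := by
    apply cauchySeq_of_summable_dist
    have h1 : ∀ n, dist (backwardTraj T n x) (backwardTraj T (n + 1) x)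
        ≤ (∏ i ∈ Finset.range n, (s i : ℝ)) * Metric.diam C := by
      intro n
      have hTx : T n x ∈ C := hinv n hx
      calc dist (backwardTraj T n x) (backwardTraj T (n + 1) x)
          = dist (backwardTraj T n x) (backwardTraj T n (T n x)) := rfl
        _ ≤ (∏ i ∈ Finset.range n, (s i : ℝ)) * dist x (T n x) := hdistle n x (T n x)
        _ ≤ (∏ i ∈ Finset.range n, (s i : ℝ)) * Metric.diam C := by
            apply mul_le_mul_of_nonneg_left (Metric.dist_le_diam_of_mem hbdd hx hTx)
            positivity
    apply Summable.of_nonneg_of_le (fun n => dist_nonneg) h1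
    exact hsum'.mul_right _
  obtain ⟨p, hp⟩ := cauchySeq_tendsto_of_complete hcauchy
  have hpC : p ∈ C := hCc.isClosed.mem_of_tendsto hp (Eventually.of_forall hmem)
  refine ⟨p, hpC, fun y hy => ?_⟩
  -- dist (Ψ_k y) (Ψ_k x) → 0
  have hdy : Tendsto (fun k => dist (backwardTraj T k y) (backwardTraj T k x)) atTop (𝓝 0) := by
    have hle : ∀ k, dist (backwardTraj T k y) (backwardTraj T k x)
        ≤ (∏ i ∈ Finset.range k, (s i : ℝ)) * dist y x := fun k => hdistle k y x
    have h0 : Tendsto (fun k => (∏ i ∈ Finset.range k, (s i : ℝ)) * dist y x) atTop (𝓝 0) := by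
      simpa using hprod0.mul_const (dist y x)
    exact squeeze_zero (fun k => dist_nonneg) hle h0
  have : Tendsto (fun k => dist (backwardTraj T k y) p) atTop (𝓝 0) := by
    have hsum2 : Tendsto (fun k => dist (backwardTraj T k y) (backwardTraj T k x)
        + dist (backwardTraj T k x) p) atTop (𝓝 0) := by
      simpa using hdy.add ((tendsto_iff_dist_tendsto_zero).mp hp)
    exact squeeze_zero (fun k => dist_nonneg)
      (fun k => dist_triangle _ _ _) hsum2
  exact tendsto_iff_dist_tendsto_zero.mpr this
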